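/- For every n ≥ 3, the number of permutations π ∈ S_n such that π avoids both 231 and 1432 and π² avoids 231 equals ⌈(n−1)/2⌉ plus the number of such permutations in S_{n−1} plus the number of such permutations in S_{n−2}. That is, writing f(m) for the number of π ∈ S_m with π avoiding 231 and 1432 and π² avoiding 231, one has f(n) = ⌈(n−1)/2⌉ + f(n−1) + f(n−2) for n ≥ 3. -/
import Mathlib

open Equiv



/-- `π` contains the (classical) pattern `σ`: there is a strictly increasing
sequence of positions on which `π` is order isomorphic to `σ`. -/
def ContainsPat {n k : ℕ} (π : Equiv.Perm (Fin n)) (σ : Equiv.Perm (Fin k)) : Prop :=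
  ∃ f : Fin k → Fin n, StrictMono f ∧ ∀ a b : Fin k, σ a < σ b ↔ π (f a) < π (f b)

/-- `π` avoids the pattern `σ`. -/
def AvoidsPat {n k : ℕ} (π : Equiv.Perm (Fin n)) (σ : Equiv.Perm (Fin k)) : Prop :=
  ¬ ContainsPat π σ

/-- `π` contains the consecutive pattern `σ`: some `k` consecutive positions of `π`
carry values order isomorphic to `σ`. -/
def ContainsConsecPat {n k : ℕ} (π : Equiv.Perm (Fin n)) (σ : Equiv.Perm (Fin k)) : Prop :=
  ∃ (i : ℕ) (h : i + k ≤ n), ∀ a b : Fin k,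
    σ a < σ b ↔ π ⟨i + a.val, by have := a.isLt; omega⟩ < π ⟨i + b.val, by have := b.isLt; omega⟩

/-- `π` avoids the consecutive pattern `σ`. -/
def AvoidsConsecPat {n k : ℕ} (π : Equiv.Perm (Fin n)) (σ : Equiv.Perm (Fin k)) : Prop :=
  ¬ ContainsConsecPat π σ

/-- the pattern 231 (0-indexed: 0 ↦ 1, 1 ↦ 2, 2 ↦ 0) -/
def p231 : Equiv.Perm (Fin 3) := c[0, 1, 2]

/-- the pattern 312 (0-indexed: 0 ↦ 2, 1 ↦ 0, 2 ↦ 1) -/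
def p312 : Equiv.Perm (Fin 3) := c[0, 2, 1]

/-- the pattern 213 (0-indexed: 0 ↦ 1, 1 ↦ 0, 2 ↦ 2) -/
def p213 : Equiv.Perm (Fin 3) := c[0, 1]

/-- the pattern 1432 (0-indexed: 0 ↦ 0, 1 ↦ 3, 2 ↦ 2, 3 ↦ 1) -/
def p1432 : Equiv.Perm (Fin 4) := c[1, 3]

/-- direct sum of two permutations -/
def dsum {k m : ℕ} (σ : Equiv.Perm (Fin k)) (τ : Equiv.Perm (Fin m)) :
    Equiv.Perm (Fin (k + m)) :=
  finSumFinEquiv.symm.trans ((Equiv.sumCongr σ τ).trans finSumFinEquiv)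

/-- the Lucas numbers: L₁ = 1, L₂ = 3, L_m = L_{m-1} + L_{m-2} -/
def lucas : ℕ → ℕ
  | 0 => 2
  | 1 => 1
  | n + 2 => lucas (n + 1) + lucas n

lemma contains231_iff {n : ℕ} (π : Perm (Fin n)) :
    ContainsPat π p231 ↔ ∃ i j k : Fin n, i < j ∧ j < k ∧ π k < π i ∧ π i < π j := by
  constructor
  · rintro ⟨f, hm, hi⟩
    exact ⟨f 0, f 1, f 2, hm (by decide), hm (by decide),
      (hi 2 0).1 (by decide), (hi 0 1).1 (by decide)⟩
  · rintro ⟨i, j, k, h1, h2, h3, h4⟩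
    refine ⟨![i, j, k], ?_, ?_⟩
    · intro a b hab
      fin_cases a <;> fin_cases b <;>
        simp only [Matrix.cons_val_zero, Matrix.cons_val_one, Matrix.head_cons,
          Matrix.cons_val_two, Matrix.tail_cons] <;>
        first
          | exact absurd hab (by decide)
          | exact h1
          | exact h2
          | exact lt_trans h1 h2
    · intro a b
      have h5 : π i < π k → False := fun h => absurd (lt_trans h3 h) (lt_irrefl _)
      fin_cases a <;> fin_cases b <;>
        simp only [Matrix.cons_val_zero, Matrix.cons_val_one, Matrix.head_cons,
          Matrix.cons_val_two, Matrix.tail_cons] <;>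
        constructor <;> intro h <;>
        first
          | exact h4
          | exact h3
          | exact lt_trans h3 h4
          | exact absurd h (by decide)
          | exact absurd h (lt_asymm h4)
          | exact absurd h (lt_asymm h3)
          | exact absurd h (lt_asymm (lt_trans h3 h4))
          | exact absurd h (lt_irrefl _)
          | exact (by decide)

lemma contains1432_iff {n : ℕ} (π : Perm (Fin n)) :
    ContainsPat π p1432 ↔ ∃ i j k l : Fin n,
      i < j ∧ j < k ∧ k < l ∧ π i < π l ∧ π l < π k ∧ π k < π j := by
  constructor
  · rintro ⟨f, hm, hi⟩
    exact ⟨f 0, f 1, f 2, f 3, hm (by decide), hm (by decide), hm (by decide),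
      (hi 0 3).1 (by decide), (hi 3 2).1 (by decide), (hi 2 1).1 (by decide)⟩
  · rintro ⟨i, j, k, l, h1, h2, h3, h4, h5, h6⟩
    refine ⟨![i, j, k, l], ?_, ?_⟩
    · intro a b hab
      fin_cases a <;> fin_cases b <;>
        first
          | exact absurd hab (by decide)
          | exact h1
          | exact h2
          | exact h3
          | exact lt_trans h1 h2
          | exact lt_trans h2 h3
          | exact lt_trans (lt_trans h1 h2) h3
    · intro a b
      fin_cases a <;> fin_cases b <;>
        (constructor <;> intro h <;>
          first
            | decide
            | exact absurd h (by decide)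
            | exact h4
            | exact h5
            | exact h6
            | exact lt_trans h4 h5
            | exact lt_trans h5 h6
            | exact lt_trans (lt_trans h4 h5) h6
            | exact absurd h (lt_irrefl _)
            | exact absurd h (lt_asymm h4)
            | exact absurd h (lt_asymm h5)
            | exact absurd h (lt_asymm h6)
            | exact absurd h (lt_asymm (lt_trans h4 h5))
            | exact absurd h (lt_asymm (lt_trans h5 h6))
            | exact absurd h (lt_asymm (lt_trans (lt_trans h4 h5) h6)))

lemma split_lt {n : ℕ} (π : Perm (Fin n)) (t : ℕ)
    (h : ∀ j : Fin n, t ≤ (j : ℕ) → t ≤ (π j : ℕ)) :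
    ∀ i : Fin n, (i : ℕ) < t → (π i : ℕ) < t := by
  intro i hi
  by_contra hc
  push_neg at hc
  have htn : t ≤ n := le_trans hc (le_of_lt (π i).isLt)
  -- F : Fin (n - t) → Fin (n - t), x ↦ π(t+x) - t
  set F : Fin (n - t) → Fin (n - t) := fun x =>
    ⟨(π ⟨t + x.val, by omega⟩ : ℕ) - t, by
      have h1 := h ⟨t + x.val, by omega⟩ (by simp)
      have h2 := (π ⟨t + x.val, by omega⟩).isLt
      omega⟩ with hF
  have hFinj : Function.Injective F := by
    intro x y hxy
    have h1 := h ⟨t + x.val, by omega⟩ (by simp)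
    have h2 := h ⟨t + y.val, by omega⟩ (by simp)
    have := congrArg Fin.val hxy
    simp only [hF] at this
    have heq : π ⟨t + x.val, by omega⟩ = π ⟨t + y.val, by omega⟩ := by
      apply Fin.ext; omega
    have := π.injective heq
    have := congrArg Fin.val this
    simp at this
    exact Fin.ext (by omega)
  have hFsurj : Function.Surjective F := Finite.surjective_of_injective hFinj
  obtain ⟨x, hx⟩ := hFsurj ⟨(π i : ℕ) - t, by have := (π i).isLt; omega⟩
  have h1 := h ⟨t + x.val, by omega⟩ (by simp)
  have := congrArg Fin.val hx
  simp only [hF] at this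
  have heq : π ⟨t + x.val, by omega⟩ = π i := by apply Fin.ext; omega
  have := congrArg Fin.val (π.injective heq)
  simp at this
  omega

lemma split_ge {n : ℕ} (π : Perm (Fin n)) (t : ℕ)
    (h : ∀ i : Fin n, (i : ℕ) < t → (π i : ℕ) < t) :
    ∀ j : Fin n, t ≤ (j : ℕ) → t ≤ (π j : ℕ) := by
  intro j hj
  by_contra hc
  push_neg at hc
  have htn : t ≤ n := le_trans hj (le_of_lt j.isLt)
  set F : Fin t → Fin t := fun x =>
    ⟨(π ⟨x.val, by omega⟩ : ℕ), by
      exact h ⟨x.val, by omega⟩ (by simpa using x.isLt)⟩ with hF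
  have hFinj : Function.Injective F := by
    intro x y hxy
    have := congrArg Fin.val hxy
    simp only [hF] at this
    have heq : π ⟨x.val, by omega⟩ = π ⟨y.val, by omega⟩ := Fin.ext (by omega)
    have := congrArg Fin.val (π.injective heq)
    simp at this
    exact Fin.ext (by omega)
  have hFsurj : Function.Surjective F := Finite.surjective_of_injective hFinj
  obtain ⟨x, hx⟩ := hFsurj ⟨(π j : ℕ), by omega⟩
  have := congrArg Fin.val hx
  simp only [hF] at this
  have heq : π ⟨x.val, by omega⟩ = π j := Fin.ext (by omega)
  have := congrArg Fin.val (π.injective heq)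
  simp at this
  omega

/-- stepping lemma: a map strictly increasing on consecutive positions gains at least d. -/
lemma steps_ge {g : ℕ → ℕ} {lo hi : ℕ}
    (h : ∀ u, lo ≤ u → u + 1 ≤ hi → g u < g (u + 1)) :
    ∀ d u, lo ≤ u → u + d ≤ hi → g u + d ≤ g (u + d) := by
  intro d
  induction d with
  | zero => intro u _ _; simp
  | succ d ih =>
    intro u hu hud
    have h1 := ih u hu (by omega)
    have h2 := h (u + d) (by omega) (by omega)
    have h3 : u + (d + 1) = (u + d) + 1 := by omega
    rw [h3]
    omega

lemma perm_sq_apply {N : ℕ} (ρ : Perm (Fin N)) (y : Fin N) : (ρ ^ 2) y = ρ (ρ y) := by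
  rw [pow_two]; rfl

lemma dsum_castAdd {k m : ℕ} (σ : Perm (Fin k)) (τ : Perm (Fin m)) (y : Fin k) :
    dsum σ τ (Fin.castAdd m y) = Fin.castAdd m (σ y) := by
  simp only [dsum, Equiv.trans_apply, finSumFinEquiv_symm_apply_castAdd,
    Equiv.sumCongr_apply, Sum.map_inl, finSumFinEquiv_apply_left]

lemma dsum_natAdd {k m : ℕ} (σ : Perm (Fin k)) (τ : Perm (Fin m)) (y : Fin m) :
    dsum σ τ (Fin.natAdd k y) = Fin.natAdd k (τ y) := by
  simp only [dsum, Equiv.trans_apply, finSumFinEquiv_symm_apply_natAdd,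
    Equiv.sumCongr_apply, Sum.map_inr, finSumFinEquiv_apply_right]

lemma dsum_apply_lt {k m : ℕ} (σ : Perm (Fin k)) (τ : Perm (Fin m)) (x : Fin (k + m))
    (h : (x : ℕ) < k) : dsum σ τ x = Fin.castAdd m (σ ⟨x, h⟩) := by
  have hx : x = Fin.castAdd m ⟨x, h⟩ := by apply Fin.ext; simp
  conv_lhs => rw [hx]
  exact dsum_castAdd σ τ _

lemma dsum_apply_ge {k m : ℕ} (σ : Perm (Fin k)) (τ : Perm (Fin m)) (x : Fin (k + m))
    (h : k ≤ (x : ℕ)) : dsum σ τ x = Fin.natAdd k (τ ⟨x - k, by have := x.isLt; omega⟩) := by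
  have hx : x = Fin.natAdd k ⟨x - k, by have := x.isLt; omega⟩ := by
    apply Fin.ext; simp; omega
  conv_lhs => rw [hx]
  exact dsum_natAdd σ τ _

lemma dsum_val_lt {k m : ℕ} (σ : Perm (Fin k)) (τ : Perm (Fin m)) (x : Fin (k + m))
    (h : (x : ℕ) < k) : (dsum σ τ x : ℕ) = (σ ⟨x, h⟩ : ℕ) := by
  rw [dsum_apply_lt σ τ x h]; simp

lemma dsum_val_ge {k m : ℕ} (σ : Perm (Fin k)) (τ : Perm (Fin m)) (x : Fin (k + m))
    (h : k ≤ (x : ℕ)) :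
    (dsum σ τ x : ℕ) = k + (τ ⟨x - k, by have := x.isLt; omega⟩ : ℕ) := by
  rw [dsum_apply_ge σ τ x h]; simp

lemma dsum_sq {k m : ℕ} (σ : Perm (Fin k)) (τ : Perm (Fin m)) :
    (dsum σ τ) ^ 2 = dsum (σ ^ 2) (τ ^ 2) := by
  apply Equiv.ext
  intro x
  rw [perm_sq_apply]
  rcases lt_or_ge (x : ℕ) k with h | h
  · rw [dsum_apply_lt σ τ x h, dsum_castAdd, dsum_apply_lt (σ ^ 2) (τ ^ 2) x h, perm_sq_apply]
  · rw [dsum_apply_ge σ τ x h, dsum_natAdd, dsum_apply_ge (σ ^ 2) (τ ^ 2) x h, perm_sq_apply]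

lemma contains_dsum_of_contains {n m j : ℕ} (π : Perm (Fin n)) (τ : Perm (Fin m))
    (σ : Perm (Fin j)) (h : ContainsPat π σ) : ContainsPat (dsum π τ) σ := by
  obtain ⟨f, hm, hi⟩ := h
  refine ⟨fun a => Fin.castAdd m (f a), ?_, ?_⟩
  · intro a b hab
    have := hm hab
    simp only [Fin.lt_def, Fin.coe_castAdd]
    exact this
  · intro a b
    rw [hi a b, dsum_castAdd, dsum_castAdd]
    simp only [Fin.lt_def, Fin.coe_castAdd]

lemma contains231_of_dsum {n m : ℕ} (π : Perm (Fin n)) (τ : Perm (Fin m)) (hm : m ≤ 2)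
    (h : ContainsPat (dsum π τ) p231) : ContainsPat π p231 := by
  rw [contains231_iff] at h
  obtain ⟨i, j, k, h1, h2, h3, h4⟩ := h
  simp only [Fin.lt_def] at h1 h2 h3 h4
  rcases lt_or_ge (k : ℕ) n with hk | hk
  · have hj : (j : ℕ) < n := lt_trans h2 hk
    have hi : (i : ℕ) < n := lt_trans h1 hj
    rw [contains231_iff]
    refine ⟨⟨i, hi⟩, ⟨j, hj⟩, ⟨k, hk⟩, Fin.mk_lt_mk.mpr h1,
      Fin.mk_lt_mk.mpr h2, ?_, ?_⟩ <;>
    · simp only [Fin.lt_def]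
      rw [← dsum_val_lt π τ _ (by assumption), ← dsum_val_lt π τ _ (by assumption)]
      omega
  · exfalso
    have hvk : n ≤ (dsum π τ k : ℕ) := by rw [dsum_val_ge π τ k hk]; omega
    have hi : n ≤ (i : ℕ) := by
      by_contra hc
      push_neg at hc
      have := dsum_val_lt π τ i hc
      have := (π ⟨i, hc⟩).isLt
      omega
    have := i.isLt
    have := k.isLt
    omega

lemma contains1432_of_dsum {n m : ℕ} (π : Perm (Fin n)) (τ : Perm (Fin m)) (hm : m ≤ 2)
    (h : ContainsPat (dsum π τ) p1432) : ContainsPat π p1432 := by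
  rw [contains1432_iff] at h
  obtain ⟨i, j, k, l, h1, h2, h3, h4, h5, h6⟩ := h
  simp only [Fin.lt_def] at h1 h2 h3 h4 h5 h6
  have hj : (j : ℕ) < n := by
    by_contra hc
    push_neg at hc
    have := j.isLt
    have := l.isLt
    omega
  have hi : (i : ℕ) < n := lt_trans h1 hj
  have hvj : (dsum π τ j : ℕ) < n := by
    rw [dsum_val_lt π τ j hj]
    exact (π ⟨j, hj⟩).isLt
  have hk : (k : ℕ) < n := by
    by_contra hc
    push_neg at hc
    have := dsum_val_ge π τ k hc
    omega
  have hvk : (dsum π τ k : ℕ) < n := by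
    rw [dsum_val_lt π τ k hk]
    exact (π ⟨k, hk⟩).isLt
  have hl : (l : ℕ) < n := by
    by_contra hc
    push_neg at hc
    have := dsum_val_ge π τ l hc
    omega
  rw [contains1432_iff]
  refine ⟨⟨i, hi⟩, ⟨j, hj⟩, ⟨k, hk⟩, ⟨l, hl⟩, Fin.mk_lt_mk.mpr h1,
    Fin.mk_lt_mk.mpr h2, Fin.mk_lt_mk.mpr h3, ?_, ?_, ?_⟩ <;>
  · simp only [Fin.lt_def]
    rw [← dsum_val_lt π τ _ (by assumption), ← dsum_val_lt π τ _ (by assumption)]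
    omega

def betaT (n a : ℕ) (i : Fin n) : Fin n :=
  if (i : ℕ) < n - a then ⟨n - 1 - i, by have := i.isLt; omega⟩
    else ⟨(i : ℕ) - (n - a), by have := i.isLt; omega⟩
def betaI (n a : ℕ) (v : Fin n) : Fin n :=
  if h : a ≤ (v : ℕ) then ⟨n - 1 - v, by have := v.isLt; omega⟩
    else ⟨(v : ℕ) + (n - a), by have := v.isLt; omega⟩
lemma betaT_val (n a : ℕ) (i : Fin n) :
    (betaT n a i : ℕ) = if (i : ℕ) < n - a then n - 1 - i else (i : ℕ) - (n - a) := by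
  unfold betaT
  split_ifs <;> rfl
lemma betaI_val (n a : ℕ) (v : Fin n) :
    (betaI n a v : ℕ) = if a ≤ (v : ℕ) then n - 1 - v else (v : ℕ) + (n - a) := by
  unfold betaI
  split_ifs <;> rfl
def beta (n a : ℕ) : Equiv.Perm (Fin n) where
  toFun := betaT n a
  invFun := betaI n a
  left_inv := by
    intro i
    have hi := i.isLt
    apply Fin.ext
    rw [betaI_val, betaT_val]
    split_ifs <;> omega
  right_inv := by
    intro v
    have hv := v.isLt
    apply Fin.ext
    rw [betaT_val, betaI_val]
    split_ifs <;> omega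
lemma beta_val_lt (n a : ℕ) (i : Fin n) (h : (i : ℕ) < n - a) :
    (beta n a i : ℕ) = n - 1 - i := by
  have := betaT_val n a i
  rw [if_pos h] at this
  exact this
lemma beta_val_ge (n a : ℕ) (i : Fin n) (h : n - a ≤ (i : ℕ)) :
    (beta n a i : ℕ) = (i : ℕ) - (n - a) := by
  have := betaT_val n a i
  rw [if_neg (not_lt.mpr h)] at this
  exact this

lemma beta_sq_val_x (n a : ℕ) (h2 : 2 * a ≤ n) (i : Fin n) (h : (i : ℕ) < a) :
    (((beta n a) ^ 2) i : ℕ) = a - 1 - (i : ℕ) := by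
  have hi := i.isLt
  rw [perm_sq_apply]
  have e1 := beta_val_lt n a i (by omega)
  have e2 := beta_val_ge n a (beta n a i) (by omega)
  omega

lemma beta_sq_val_y (n a : ℕ) (h2 : 2 * a ≤ n) (i : Fin n) (ha : a ≤ (i : ℕ))
    (hb : (i : ℕ) < n - a) : (((beta n a) ^ 2) i : ℕ) = (i : ℕ) := by
  have hi := i.isLt
  rw [perm_sq_apply]
  have e1 := beta_val_lt n a i hb
  have e2 := beta_val_lt n a (beta n a i) (by omega)
  omega

lemma beta_sq_val_z (n a : ℕ) (h2 : 2 * a ≤ n) (i : Fin n) (h : n - a ≤ (i : ℕ)) :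
    (((beta n a) ^ 2) i : ℕ) = n - 1 - ((i : ℕ) - (n - a)) := by
  have hi := i.isLt
  rw [perm_sq_apply]
  have e1 := beta_val_ge n a i h
  have e2 := beta_val_lt n a (beta n a i) (by omega)
  omega

lemma beta_avoids231 (n a : ℕ) : AvoidsPat (beta n a) p231 := by
  intro hc
  rw [contains231_iff] at hc
  obtain ⟨i, j, k, h1, h2, h3, h4⟩ := hc
  simp only [Fin.lt_def] at h1 h2 h3 h4
  have hi := i.isLt; have hj := j.isLt; have hk := k.isLt
  rcases lt_or_ge (i : ℕ) (n - a) with ri | ri <;>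
    rcases lt_or_ge (j : ℕ) (n - a) with rj | rj <;>
      rcases lt_or_ge (k : ℕ) (n - a) with rk | rk <;>
  · first
      | have ei := beta_val_lt n a i (by omega)
      | have ei := beta_val_ge n a i (by omega)
    first
      | have ej := beta_val_lt n a j (by omega)
      | have ej := beta_val_ge n a j (by omega)
    first
      | have ek := beta_val_lt n a k (by omega)
      | have ek := beta_val_ge n a k (by omega)
    omega

lemma beta_avoids1432 (n a : ℕ) : AvoidsPat (beta n a) p1432 := by
  intro hc
  rw [contains1432_iff] at hc
  obtain ⟨i, j, k, l, h1, h2, h3, h4, h5, h6⟩ := hc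
  simp only [Fin.lt_def] at h1 h2 h3 h4 h5 h6
  have hi := i.isLt; have hj := j.isLt; have hk := k.isLt; have hl := l.isLt
  rcases lt_or_ge (i : ℕ) (n - a) with ri | ri <;>
    rcases lt_or_ge (j : ℕ) (n - a) with rj | rj <;>
      rcases lt_or_ge (k : ℕ) (n - a) with rk | rk <;>
        rcases lt_or_ge (l : ℕ) (n - a) with rl | rl <;>
  · first
      | have ei := beta_val_lt n a i (by omega)
      | have ei := beta_val_ge n a i (by omega)
    first
      | have ej := beta_val_lt n a j (by omega)
      | have ej := beta_val_ge n a j (by omega)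
    first
      | have ek := beta_val_lt n a k (by omega)
      | have ek := beta_val_ge n a k (by omega)
    first
      | have el := beta_val_lt n a l (by omega)
      | have el := beta_val_ge n a l (by omega)
    omega

lemma beta_sq_avoids231 (n a : ℕ) (h2 : 2 * a ≤ n) : AvoidsPat ((beta n a) ^ 2) p231 := by
  intro hc
  rw [contains231_iff] at hc
  obtain ⟨i, j, k, h1, hb, h3, h4⟩ := hc
  simp only [Fin.lt_def] at h1 hb h3 h4
  have hi := i.isLt; have hj := j.isLt; have hk := k.isLt
  rcases lt_or_ge (i : ℕ) a with ri | ri <;>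
    rcases lt_or_ge (i : ℕ) (n - a) with ri' | ri' <;>
      rcases lt_or_ge (j : ℕ) a with rj | rj <;>
        rcases lt_or_ge (j : ℕ) (n - a) with rj' | rj' <;>
          rcases lt_or_ge (k : ℕ) a with rk | rk <;>
            rcases lt_or_ge (k : ℕ) (n - a) with rk' | rk' <;>
  · first
      | have ei := beta_sq_val_x n a h2 i (by omega)
      | have ei := beta_sq_val_y n a h2 i (by omega) (by omega)
      | have ei := beta_sq_val_z n a h2 i (by omega)
    first
      | have ej := beta_sq_val_x n a h2 j (by omega)
      | have ej := beta_sq_val_y n a h2 j (by omega) (by omega)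
      | have ej := beta_sq_val_z n a h2 j (by omega)
    first
      | have ek := beta_sq_val_x n a h2 k (by omega)
      | have ek := beta_sq_val_y n a h2 k (by omega) (by omega)
      | have ek := beta_sq_val_z n a h2 k (by omega)
    omega

lemma pinj {n : ℕ} (π : Perm (Fin n)) {i j : Fin n} (h : (π i : ℕ) = (π j : ℕ)) :
    (i : ℕ) = (j : ℕ) := congrArg Fin.val (π.injective (Fin.ext h))

lemma no231 {n : ℕ} {π : Perm (Fin n)} (h : AvoidsPat π p231) (i j k : Fin n)
    (h1 : (i : ℕ) < j) (h2 : (j : ℕ) < k) (h3 : (π k : ℕ) < π i) (h4 : (π i : ℕ) < π j) :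
    False := by
  exact h ((contains231_iff π).mpr ⟨i, j, k, Fin.lt_def.mpr h1, Fin.lt_def.mpr h2,
    Fin.lt_def.mpr h3, Fin.lt_def.mpr h4⟩)

lemma no1432 {n : ℕ} {π : Perm (Fin n)} (h : AvoidsPat π p1432) (i j k l : Fin n)
    (h1 : (i : ℕ) < j) (h2 : (j : ℕ) < k) (h3 : (k : ℕ) < l)
    (h4 : (π i : ℕ) < π l) (h5 : (π l : ℕ) < π k) (h6 : (π k : ℕ) < π j) : False := by
  exact h ((contains1432_iff π).mpr ⟨i, j, k, l, Fin.lt_def.mpr h1, Fin.lt_def.mpr h2,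
    Fin.lt_def.mpr h3, Fin.lt_def.mpr h4, Fin.lt_def.mpr h5, Fin.lt_def.mpr h6⟩)

/-- splitting at the position of the maximum for a 231-avoiding permutation -/
lemma max_split {n : ℕ} {π : Perm (Fin n)} (hA : AvoidsPat π p231) (z : Fin n)
    (hz : (π z : ℕ) = n - 1) :
    (∀ i : Fin n, (i : ℕ) < z → (π i : ℕ) < z) ∧
    (∀ j : Fin n, (z : ℕ) ≤ j → (z : ℕ) ≤ π j) := by
  have hpoint : ∀ i j : Fin n, (i : ℕ) < z → (z : ℕ) < j → (π i : ℕ) < π j := by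
    intro i j hi hj
    by_contra hc
    push_neg at hc
    have hne : (π j : ℕ) ≠ (π i : ℕ) := fun he => by have := pinj π he; omega
    have hiz : (π i : ℕ) < π z := by
      have h1 : (π i : ℕ) ≠ π z := fun he => by have := pinj π he; omega
      have h2 := (π i).isLt
      omega
    exact no231 hA i z j hi hj (by omega) hiz
  have part1 : ∀ i : Fin n, (i : ℕ) < z → (π i : ℕ) < z := by
    intro i hi
    by_contra hc
    push_neg at hc
    have hbig : ∀ j : Fin n, (z : ℕ) ≤ j → (z : ℕ) ≤ π j := by
      intro j hj
      rcases eq_or_lt_of_le hj with he | hlt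
      · have : j = z := Fin.ext he.symm
        rw [this, hz]
        have := z.isLt
        omega
      · have := hpoint i j hi hlt
        omega
    have := split_lt π z hbig i hi
    omega
  exact ⟨part1, split_ge π z part1⟩

/-- Trichotomy: a good permutation fixes the last point, or swaps the last two,
or sends 0 to the maximum. -/
lemma trichotomy {n : ℕ} (hn : 3 ≤ n) (π : Perm (Fin n)) (h231 : AvoidsPat π p231)
    (h1432 : AvoidsPat π p1432) (hsq : AvoidsPat (π ^ 2) p231)
    (hA : (π ⟨n - 1, by omega⟩ : ℕ) ≠ n - 1)
    (hB : ¬ ((π ⟨n - 2, by omega⟩ : ℕ) = n - 1 ∧ (π ⟨n - 1, by omega⟩ : ℕ) = n - 2)) :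
    (π ⟨0, by omega⟩ : ℕ) = n - 1 := by
  set p : Fin n := π.symm ⟨n - 1, by omega⟩ with hpdef
  have hp : (π p : ℕ) = n - 1 := by rw [hpdef]; simp
  obtain ⟨S1, S2⟩ := max_split h231 p hp
  have hplt := p.isLt
  -- case p = n-1
  by_cases hc1 : (p : ℕ) = n - 1
  · exfalso
    apply hA
    have : (⟨n - 1, by omega⟩ : Fin n) = p := Fin.ext (show (n - 1 : ℕ) = (p : ℕ) by omega)
    rw [this, hp]
  by_cases hc2 : (p : ℕ) = n - 2
  · exfalso
    apply hB
    constructor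
    · have : (⟨n - 2, by omega⟩ : Fin n) = p := Fin.ext (show (n - 2 : ℕ) = (p : ℕ) by omega)
      rw [this, hp]
    · have hge : (p : ℕ) ≤ (π ⟨n - 1, by omega⟩ : ℕ) :=
        S2 ⟨n - 1, by omega⟩ (show (p : ℕ) ≤ n - 1 by omega)
      have hne : (π ⟨n - 1, by omega⟩ : ℕ) ≠ n - 1 := hA
      have := (π ⟨n - 1, by omega⟩).isLt
      omega
  by_cases hc0 : (p : ℕ) = 0
  · have : (⟨0, by omega⟩ : Fin n) = p := Fin.ext (show (0 : ℕ) = (p : ℕ) by omega)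
    rw [this, hp]
  -- middle case: 1 ≤ p ≤ n-3, derive contradiction
  exfalso
  have hp1 : 1 ≤ (p : ℕ) := by omega
  have hp3 : (p : ℕ) ≤ n - 3 := by omega
  -- the suffix is ascending
  have hasc : ∀ (u : ℕ) (_ : (p : ℕ) < u) (_ : u + 1 ≤ n - 1),
      (π ⟨u, by omega⟩ : ℕ) < (π ⟨u + 1, by omega⟩ : ℕ) := by
    intro u hu hun
    by_contra hcc
    push_neg at hcc
    have hne : (π ⟨u + 1, by omega⟩ : ℕ) ≠ (π ⟨u, by omega⟩ : ℕ) := by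
      intro he
      have h' : u + 1 = u := pinj π he
      omega
    have h0p : (π ⟨0, by omega⟩ : ℕ) < p := S1 ⟨0, by omega⟩ (show (0 : ℕ) < (p : ℕ) by omega)
    have hU : (p : ℕ) ≤ (π ⟨u + 1, by omega⟩ : ℕ) :=
      S2 ⟨u + 1, by omega⟩ (show (p : ℕ) ≤ u + 1 by omega)
    have hUlt : (π ⟨u, by omega⟩ : ℕ) < n - 1 := by
      have h1 : (π ⟨u, by omega⟩ : ℕ) ≠ n - 1 := by
        intro he
        have h2 : (π ⟨u, by omega⟩ : ℕ) = (π p : ℕ) := by omega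
        have h3 : u = (p : ℕ) := pinj π h2
        omega
      have := (π ⟨u, by omega⟩).isLt
      omega
    exact no1432 h1432 ⟨0, by omega⟩ p ⟨u, by omega⟩ ⟨u + 1, by omega⟩
      (show (0 : ℕ) < (p : ℕ) by omega) (show (p : ℕ) < u by omega)
      (show (u : ℕ) < u + 1 by omega) (by omega) (by omega) (by omega)
  -- value chain via steps
  set g : ℕ → ℕ := fun u => if h : u < n then (π ⟨u, h⟩ : ℕ) else 0 with hg
  have hgval : ∀ u (h : u < n), g u = (π ⟨u, h⟩ : ℕ) := by
    intro u h; rw [hg]; simp [h]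
  have hstep : ∀ u, (p : ℕ) + 1 ≤ u → u + 1 ≤ n - 1 → g u < g (u + 1) := by
    intro u hu hun
    rw [hgval u (by omega), hgval (u + 1) (by omega)]
    exact hasc u (by omega) hun
  have hlast : g (n - 1) = n - 2 := by
    have hge : (p : ℕ) ≤ g ((p : ℕ) + 1) := by
      rw [hgval _ (by omega)]
      exact S2 ⟨(p : ℕ) + 1, by omega⟩ (show (p : ℕ) ≤ (p : ℕ) + 1 by omega)
    have hup := steps_ge hstep (n - 1 - ((p : ℕ) + 1)) ((p : ℕ) + 1) (le_refl _) (by omega)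
    have heq : (p : ℕ) + 1 + (n - 1 - ((p : ℕ) + 1)) = n - 1 := by omega
    rw [heq] at hup
    have hlt : g (n - 1) < n - 1 := by
      rw [hgval _ (by omega)]
      have h1 : (π ⟨n - 1, by omega⟩ : ℕ) ≠ n - 1 := hA
      have := (π ⟨n - 1, by omega⟩).isLt
      omega
    omega
  have hval1 : g ((p : ℕ) + 1) = p := by
    have hge : (p : ℕ) ≤ g ((p : ℕ) + 1) := by
      rw [hgval _ (by omega)]
      exact S2 ⟨(p : ℕ) + 1, by omega⟩ (show (p : ℕ) ≤ (p : ℕ) + 1 by omega)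
    have hup := steps_ge hstep (n - 1 - ((p : ℕ) + 1)) ((p : ℕ) + 1) (le_refl _) (by omega)
    have heq : (p : ℕ) + 1 + (n - 1 - ((p : ℕ) + 1)) = n - 1 := by omega
    rw [heq, hlast] at hup
    omega
  have hval2 : g ((p : ℕ) + 2) = (p : ℕ) + 1 := by
    have hge : g ((p : ℕ) + 1) < g ((p : ℕ) + 2) := hstep _ (le_refl _) (by omega)
    have hup := steps_ge hstep (n - 1 - ((p : ℕ) + 2)) ((p : ℕ) + 2) (by omega) (by omega)
    have heq : (p : ℕ) + 2 + (n - 1 - ((p : ℕ) + 2)) = n - 1 := by omega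
    rw [heq, hlast] at hup
    omega
  -- the 231 pattern in π²
  have e1 : ((π ^ 2) p : ℕ) = n - 2 := by
    rw [perm_sq_apply]
    have h' : π p = ⟨n - 1, by omega⟩ := Fin.ext hp
    rw [h']
    have h2 := hlast
    rw [hgval (n - 1) (by omega)] at h2
    exact h2
  have e2 : ((π ^ 2) ⟨(p : ℕ) + 1, by omega⟩ : ℕ) = n - 1 := by
    rw [perm_sq_apply]
    have h' : π ⟨(p : ℕ) + 1, by omega⟩ = p := by
      apply Fin.ext
      have h2 := hval1
      rw [hgval ((p : ℕ) + 1) (by omega)] at h2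
      exact h2
    rw [h', hp]
  have e3 : ((π ^ 2) ⟨(p : ℕ) + 2, by omega⟩ : ℕ) = (p : ℕ) := by
    rw [perm_sq_apply]
    have h' : π ⟨(p : ℕ) + 2, by omega⟩ = ⟨(p : ℕ) + 1, by omega⟩ := by
      apply Fin.ext
      have h2 := hval2
      rw [hgval ((p : ℕ) + 2) (by omega)] at h2
      exact h2
    rw [h']
    have h2 := hval1
    rw [hgval ((p : ℕ) + 1) (by omega)] at h2
    exact h2
  exact no231 hsq p ⟨(p : ℕ) + 1, by omega⟩ ⟨(p : ℕ) + 2, by omega⟩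
    (show (p : ℕ) < (p : ℕ) + 1 by omega) (show ((p : ℕ) + 1 : ℕ) < (p : ℕ) + 2 by omega)
    (by omega) (by omega)

set_option maxHeartbeats 1000000 in
open Classical in
/-- classification of good permutations with π(0) = n-1 -/
lemma classify {n : ℕ} (hn : 3 ≤ n) (π : Perm (Fin n)) (h231 : AvoidsPat π p231)
    (hsq : AvoidsPat (π ^ 2) p231) (h0 : (π ⟨0, by omega⟩ : ℕ) = n - 1) :
    ∃ a, (a = 0 ∨ (2 ≤ a ∧ 2 * a ≤ n)) ∧ π = beta n a := by
  have hnpos : 0 < n := by omega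
  -- canonical position function
  set F : ℕ → Fin n := fun t => ⟨t % n, Nat.mod_lt t hnpos⟩ with hF
  have hFval : ∀ t, t < n → (F t : ℕ) = t := by
    intro t ht
    simp only [hF, Nat.mod_eq_of_lt ht]
  have hFeq : ∀ (t : ℕ) (h : t < n), F t = ⟨t, h⟩ := by
    intro t h
    exact Fin.ext (hFval t h)
  have hFi : ∀ i : Fin n, F (i : ℕ) = i := fun i => Fin.ext (hFval _ i.isLt)
  set P : ℕ → ℕ := fun t => (π (F t) : ℕ) with hP
  set Pos : ℕ → ℕ := fun y => (π.symm (F y) : ℕ) with hPos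
  have hPlt : ∀ t, P t < n := fun t => (π (F t)).isLt
  have hPoslt : ∀ y, Pos y < n := fun y => (π.symm (F y)).isLt
  have hPinj : ∀ t t', t < n → t' < n → P t = P t' → t = t' := by
    intro t t' ht ht' he
    have := pinj π (i := F t) (j := F t') he
    rw [hFval t ht, hFval t' ht'] at this
    exact this
  have hPPos : ∀ y, y < n → P (Pos y) = y := by
    intro y hy
    have h1 : F (Pos y) = π.symm (F y) := Fin.ext (hFval _ (hPoslt y))
    rw [hP]
    simp only [h1, Equiv.apply_symm_apply]
    exact hFval y hy
  have hPosP : ∀ t, t < n → Pos (P t) = t := by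
    intro t ht
    apply hPinj _ _ (hPoslt _) ht
    rw [hPPos _ (hPlt t)]
  -- π² at ℕ level
  set P2 : ℕ → ℕ := fun t => ((π ^ 2) (F t) : ℕ) with hP2def
  have hP2 : ∀ t, P2 t = P (P t) := by
    intro t
    rw [hP2def]
    simp only [perm_sq_apply]
    rw [hP]
    simp only []
    congr 1
    exact congrArg π (Fin.ext (hFval _ (π (F t)).isLt).symm)
  -- restated 231-avoidance
  have N231 : ∀ a b c : ℕ, a < b → b < c → c < n → P c < P a → P a < P b → False := by
    intro a b c h1 h2 h3 h4 h5
    refine no231 h231 (F a) (F b) (F c) ?_ ?_ h4 h5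
    · rw [hFval a (by omega), hFval b (by omega)]; exact h1
    · rw [hFval b (by omega), hFval c (by omega)]; exact h2
  have N231sq : ∀ a b c : ℕ, a < b → b < c → c < n → P2 c < P2 a → P2 a < P2 b → False := by
    intro a b c h1 h2 h3 h4 h5
    refine no231 hsq (F a) (F b) (F c) ?_ ?_ h4 h5
    · rw [hFval a (by omega), hFval b (by omega)]; exact h1
    · rw [hFval b (by omega), hFval c (by omega)]; exact h2
  have h0' : P 0 = n - 1 := by
    rw [hP]
    simp only []
    rw [hFeq 0 (by omega)]
    exact h0
  have hPi : ∀ i : Fin n, (π i : ℕ) = P (i : ℕ) := by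
    intro i
    rw [hP]
    simp only []
    rw [hFi]
  by_cases hall : ∀ t, t < n → P t = n - 1 - t
  · refine ⟨0, Or.inl rfl, ?_⟩
    apply Equiv.ext
    intro i
    apply Fin.ext
    rw [beta_val_lt n 0 i (by have := i.isLt; omega), hPi i]
    exact hall (i : ℕ) i.isLt
  · push_neg at hall
    obtain ⟨t0, ht0n, ht0⟩ := hall
    have hQex : ∃ t, t < n ∧ P t ≠ n - 1 - t := ⟨t0, ht0n, ht0⟩
    set s := Nat.find hQex with hsdef
    obtain ⟨hsn, hsbad⟩ : s < n ∧ P s ≠ n - 1 - s := Nat.find_spec hQex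
    have hpre : ∀ t, t < s → P t = n - 1 - t := by
      intro t ht
      have h1 := Nat.find_min hQex ht
      push_neg at h1
      exact h1 (by omega)
    have hs1 : 1 ≤ s := by
      by_contra hc
      push_neg at hc
      have hs0 : s = 0 := by omega
      rw [hs0] at hsbad
      exact hsbad (by omega)
    set v := P s with hvdef
    have hvn : v < n := hPlt s
    have hvlt : v < n - 1 - s := by
      by_contra hc
      push_neg at hc
      have ht : n - 1 - v < s := by omega
      have h1 := hpre _ ht
      have h2 : P (n - 1 - v) = P s := by omega
      have := hPinj _ _ (by omega) hsn h2
      omega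
    have hs2 : s ≤ n - 2 := by omega
    have L1a : ∀ u, s ≤ u → u < n → P u ≤ n - 1 - s := by
      intro u hu hun
      by_contra hc
      push_neg at hc
      have hub := hPlt u
      have ht : n - 1 - P u < s := by omega
      have h1 := hpre _ ht
      have h2 : P (n - 1 - P u) = P u := by omega
      have := hPinj _ _ (by omega) hun h2
      omega
    have Hlow : ∀ y, y < v → s < Pos y := by
      intro y hy
      have h1 : P (Pos y) = y := hPPos y (by omega)
      by_contra hc
      push_neg at hc
      rcases eq_or_lt_of_le hc with he | hlt
      · rw [he] at h1
        omega
      · have h2 := hpre (Pos y) hlt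
        omega
    have Hsmall : ∀ u, s < u → u ≤ s + v → P u < v := by
      intro u hsu huv
      have hun : u < n := by omega
      by_contra hc
      push_neg at hc
      have hne : P u ≠ v := by
        intro he
        have h2 : P u = P s := by omega
        have := hPinj _ _ hun hsn h2
        omega
      have hgt : v < P u := by omega
      have hpos : ∀ y, y < v → Pos y < u := by
        intro y hy
        have h1 := hPPos y (by omega)
        by_contra hc2
        push_neg at hc2
        have hne2 : Pos y ≠ u := by
          intro he
          rw [he] at h1
          omega
        exact N231 s u (Pos y) hsu (by omega) (hPoslt y) (by omega) (by omega)
      have hcard : v ≤ u - s - 1 := by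
        have hFb : ∀ y : Fin v, Pos (y : ℕ) - s - 1 < u - s - 1 := by
          intro y
          have h1 := Hlow (y : ℕ) y.isLt
          have h2 := hpos (y : ℕ) y.isLt
          omega
        set G : Fin v → Fin (u - s - 1) := fun y => ⟨Pos (y : ℕ) - s - 1, hFb y⟩ with hGdef
        have hGinj : Function.Injective G := by
          intro x y hxy
          have hx1 := Hlow (x : ℕ) x.isLt
          have hy1 := Hlow (y : ℕ) y.isLt
          have h3 := congrArg Fin.val hxy
          simp only [hGdef] at h3
          have h4 : Pos (x : ℕ) = Pos (y : ℕ) := by omega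
          have h5 := congrArg P h4
          rw [hPPos (x : ℕ) (by have := x.isLt; omega),
            hPPos (y : ℕ) (by have := y.isLt; omega)] at h5
          exact Fin.ext h5
        have := Fintype.card_le_of_injective G hGinj
        simpa using this
      omega
    have Hbig : ∀ u, s + v < u → u < n → v < P u := by
      intro u hsu hun
      by_contra hc
      push_neg at hc
      have hne : P u ≠ v := by
        intro he
        have h2 : P u = P s := by omega
        have := hPinj _ _ hun hsn h2
        omega
      have hlt : P u < v := by omega
      set Φ : Fin v → Fin v := fun x =>
        ⟨P (s + 1 + (x : ℕ)), Hsmall (s + 1 + (x : ℕ)) (by omega) (by have := x.isLt; omega)⟩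
        with hΦdef
      have hΦinj : Function.Injective Φ := by
        intro x y hxy
        have h3 := congrArg Fin.val hxy
        simp only [hΦdef] at h3
        have h4 := hPinj _ _ (by have := x.isLt; omega) (by have := y.isLt; omega) h3
        exact Fin.ext (by omega)
      have hΦsurj : Function.Surjective Φ := Finite.surjective_of_injective hΦinj
      obtain ⟨x, hx⟩ := hΦsurj ⟨P u, hlt⟩
      have h3 := congrArg Fin.val hx
      simp only [hΦdef] at h3
      have h4 := hPinj _ _ (by have := x.isLt; omega) hun h3
      have := x.isLt
      omega
    set z := Pos 0 with hzdef
    have hzn : z < n := hPoslt 0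
    have hz : P z = 0 := hPPos 0 (by omega)
    have hzs : s ≤ z := by
      by_contra hc
      push_neg at hc
      have := hpre z hc
      omega
    have hzsv : z ≤ s + v := by
      by_contra hc
      push_neg at hc
      have := Hbig z hc hzn
      omega
    have hsqz : ((π ^ 2) (F z) : ℕ) = n - 1 := by
      have h1 : P2 z = n - 1 := by rw [hP2 z, hz, h0']
      exact h1
    obtain ⟨M2a', M2b'⟩ := max_split hsq (F z) hsqz
    have M2a : ∀ t, t < z → P2 t < z := by
      intro t ht
      have h1 := M2a' (F t) (by rw [hFval t (by omega), hFval z hzn]; exact ht)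
      rw [hFval z hzn] at h1
      exact h1
    have M2b : ∀ t, z ≤ t → t < n → z ≤ P2 t := by
      intro t ht htn
      have h1 := M2b' (F t) (by rw [hFval t htn, hFval z hzn]; exact ht)
      rw [hFval z hzn] at h1
      exact h1
    have hv0 : v = 0 := by
      by_contra hvne0
      have hv1 : 1 ≤ v := by omega
      have hzgt : s < z := by
        rcases eq_or_lt_of_le hzs with he | h
        · rw [← he] at hz
          omega
        · exact h
      have hlastbig : v < P (n - 1) := Hbig (n - 1) (by omega) (by omega)
      have hlastlt : P (n - 1) < z := by
        have h1 : P2 0 < z := M2a 0 (by omega)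
        rw [hP2 0, h0'] at h1
        exact h1
      have hvz : v < z := by omega
      rcases le_or_gt n (2 * s) with hcase | hcase
      · -- C3 : use value n-1-s
        have hj'1 : P (Pos (n - 1 - s)) = n - 1 - s := hPPos _ (by omega)
        have hj'big : s + v < Pos (n - 1 - s) := by
          rcases lt_trichotomy (Pos (n - 1 - s)) s with h | h | h
          · have := hpre _ h
            omega
          · rw [h] at hj'1
            omega
          · by_contra hc
            push_neg at hc
            have := Hsmall _ h hc
            omega
        have hM := M2b (Pos (n - 1 - s)) (by omega) (hPoslt _)
        rw [hP2 _, hj'1] at hM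
        have h3 := hpre (n - 1 - s) (by omega)
        omega
      · rcases lt_or_ge v s with hvs | hvs
        · -- C1 : use value s
          have hj'1 : P (Pos s) = s := hPPos _ (by omega)
          have hj'big : s + v < Pos s := by
            rcases lt_trichotomy (Pos s) s with h | h | h
            · have := hpre _ h
              omega
            · rw [h] at hj'1
              omega
            · by_contra hc
              push_neg at hc
              have := Hsmall _ h hc
              omega
          have hM := M2b (Pos s) (by omega) (hPoslt _)
          rw [hP2 _, hj'1] at hM
          omega
        · -- C2 : use value v+1
          have hj'1 : P (Pos (v + 1)) = v + 1 := hPPos _ (by omega)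
          have hj'big : s + v < Pos (v + 1) := by
            rcases lt_trichotomy (Pos (v + 1)) s with h | h | h
            · have := hpre _ h
              omega
            · rw [h] at hj'1
              omega
            · by_contra hc
              push_neg at hc
              have := Hsmall _ h hc
              omega
          have hM := M2b (Pos (v + 1)) (by omega) (hPoslt _)
          rw [hP2 _, hj'1] at hM
          have h3 := Hsmall (v + 1) (by omega) (by omega)
          omega
    have hzeq : z = s := by
      have h2 : P z = P s := by omega
      exact hPinj _ _ hzn hsn h2
    have hn2s : n ≤ 2 * s := by
      by_contra hc
      push_neg at hc
      have hj'1 : P (Pos s) = s := hPPos _ (by omega)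
      have hj'gt : s < Pos s := by
        rcases lt_trichotomy (Pos s) s with h | h | h
        · have := hpre _ h
          omega
        · rw [h] at hj'1
          omega
        · exact h
      have hM := M2b (Pos s) (by omega) (hPoslt _)
      rw [hP2 _, hj'1] at hM
      omega
    have hasc : ∀ u, s ≤ u → u + 1 ≤ n - 1 → P u < P (u + 1) := by
      intro u hu hun
      by_contra hc
      push_neg at hc
      have hne : P (u + 1) ≠ P u := by
        intro he
        have := hPinj _ _ (by omega) (by omega) he
        omega
      have hugt : s < u := by
        rcases eq_or_lt_of_le hu with he | h
        · exfalso
          have hPu : P u = 0 := by rw [← he]; omega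
          omega
        · exact h
      have hb1 : 1 ≤ P (u + 1) := by
        by_contra hc2
        push_neg at hc2
        have h2 : P (u + 1) = P s := by omega
        have := hPinj _ _ (by omega) hsn h2
        omega
      have e1 : P2 (n - 2 - u) = P (u + 1) := by
        have ha := hpre (n - 2 - u) (by omega)
        have hb : P (n - 2 - u) = u + 1 := by omega
        rw [hP2, hb]
      have e2 : P2 (n - 1 - u) = P u := by
        have ha := hpre (n - 1 - u) (by omega)
        have hb : P (n - 1 - u) = u := by omega
        rw [hP2, hb]
      have e3 : P2 (n - 1 - s) = 0 := by
        have ha := hpre (n - 1 - s) (by omega)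
        have hb : P (n - 1 - s) = s := by omega
        rw [hP2, hb]
        omega
      exact N231sq (n - 2 - u) (n - 1 - u) (n - 1 - s) (by omega) (by omega) (by omega)
        (by omega) (by omega)
    have hsuffix : ∀ u, s ≤ u → u < n → P u = u - s := by
      intro u hsu hun
      have hlow := steps_ge hasc (u - s) s (le_refl _) (by omega)
      have heq1 : s + (u - s) = u := by omega
      rw [heq1] at hlow
      have hhigh := steps_ge hasc (n - 1 - u) u hsu (by omega)
      have heq2 : u + (n - 1 - u) = n - 1 := by omega
      rw [heq2] at hhigh
      have hL := L1a (n - 1) (by omega) (by omega)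
      omega
    refine ⟨n - s, Or.inr ⟨by omega, by omega⟩, ?_⟩
    apply Equiv.ext
    intro i
    apply Fin.ext
    rcases lt_or_ge (i : ℕ) s with h | h
    · rw [beta_val_lt n (n - s) i (by omega), hPi i]
      exact hpre (i : ℕ) h
    · rw [beta_val_ge n (n - s) i (by omega), hPi i, hsuffix (i : ℕ) h i.isLt]
      omega

/-- goodness -/
def IsGood {N : ℕ} (π : Perm (Fin N)) : Prop :=
  AvoidsPat π p231 ∧ AvoidsPat π p1432 ∧ AvoidsPat (π ^ 2) p231

lemma isGood_dsum_iff {M k : ℕ} (hk : k ≤ 2) (ρ : Perm (Fin M)) (τ : Perm (Fin k)) :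
    IsGood (dsum ρ τ) ↔ IsGood ρ := by
  unfold IsGood
  rw [dsum_sq]
  constructor
  · rintro ⟨h1, h2, h3⟩
    exact ⟨fun hc => h1 (contains_dsum_of_contains ρ τ p231 hc),
      fun hc => h2 (contains_dsum_of_contains ρ τ p1432 hc),
      fun hc => h3 (contains_dsum_of_contains (ρ ^ 2) (τ ^ 2) p231 hc)⟩
  · rintro ⟨h1, h2, h3⟩
    exact ⟨fun hc => h1 (contains231_of_dsum ρ τ hk hc),
      fun hc => h2 (contains1432_of_dsum ρ τ hk hc),
      fun hc => h3 (contains231_of_dsum (ρ ^ 2) (τ ^ 2) hk hc)⟩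

/-- restriction of a permutation fixing an initial block -/
lemma exists_restrict {M k : ℕ} (π : Perm (Fin (M + k)))
    (hsmall : ∀ i : Fin (M + k), (i : ℕ) < M → (π i : ℕ) < M) :
    ∃ ρ : Perm (Fin M), ∀ (i : Fin (M + k)) (h : (i : ℕ) < M), (π i : ℕ) = (ρ ⟨i, h⟩ : ℕ) := by
  have hsym : ∀ v : Fin (M + k), (v : ℕ) < M → (π.symm v : ℕ) < M := by
    intro v hv
    by_contra hc
    push_neg at hc
    have := split_ge π M hsmall (π.symm v) hc
    rw [Equiv.apply_symm_apply] at this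
    omega
  refine ⟨⟨fun i => ⟨(π ⟨i, by have := i.isLt; omega⟩ : ℕ),
      hsmall ⟨i, by have := i.isLt; omega⟩ (by have := i.isLt; simpa using i.isLt)⟩,
    fun v => ⟨(π.symm ⟨v, by have := v.isLt; omega⟩ : ℕ),
      hsym ⟨v, by have := v.isLt; omega⟩ (by have := v.isLt; simpa using v.isLt)⟩,
    ?_, ?_⟩, ?_⟩
  · intro i
    apply Fin.ext
    simp only []
    have he : (⟨(π ⟨(i : ℕ), by have := i.isLt; omega⟩ : ℕ), by have := i.isLt; omega⟩ :
        Fin (M + k)) = π ⟨(i : ℕ), by have := i.isLt; omega⟩ := Fin.ext rfl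
    rw [he, Equiv.symm_apply_apply]
  · intro v
    apply Fin.ext
    simp only []
    have he : (⟨(π.symm ⟨(v : ℕ), by have := v.isLt; omega⟩ : ℕ), by have := v.isLt; omega⟩ :
        Fin (M + k)) = π.symm ⟨(v : ℕ), by have := v.isLt; omega⟩ := Fin.ext rfl
    rw [he, Equiv.apply_symm_apply]
  · intro i h
    rfl

lemma mkval {N : ℕ} (x : ℕ) (h : x < N) : ((⟨x, h⟩ : Fin N) : ℕ) = x := rfl

lemma beta_isGood (n a : ℕ) (h : a = 0 ∨ (2 ≤ a ∧ 2 * a ≤ n)) : IsGood (beta n a) := by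
  refine ⟨beta_avoids231 n a, beta_avoids1432 n a, beta_sq_avoids231 n a ?_⟩
  rcases h with h | h <;> omega

/-- value of beta at the last position -/
lemma beta_last (n a : ℕ) (hn : 1 ≤ n) (ha : a = 0 ∨ (2 ≤ a ∧ 2 * a ≤ n)) :
    (beta n a ⟨n - 1, by omega⟩ : ℕ) = a - 1 := by
  rcases ha with ha | ha
  · subst ha
    rw [beta_val_lt n 0 _ (by rw [mkval]; omega)]
    rw [mkval]
    omega
  · rw [beta_val_ge n a _ (by rw [mkval]; omega)]
    rw [mkval]
    omega

lemma beta_first (n a : ℕ) (hn : 1 ≤ n) (ha : a < n) :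
    (beta n a ⟨0, by omega⟩ : ℕ) = n - 1 := by
  rw [beta_val_lt n a _ (by rw [mkval]; omega), mkval]
  omega

lemma one_fin_val (y : Fin 1) : (((1 : Perm (Fin 1)) y : Fin 1) : ℕ) = 0 := by
  have h1 : (1 : Perm (Fin 1)) y = y := rfl
  rw [h1]
  have := y.isLt
  omega

set_option maxHeartbeats 1000000 in
lemma main_count (m : ℕ) :
    Nat.card {π : Perm (Fin (m + 3)) // IsGood π} =
      Nat.card {ρ : Perm (Fin (m + 2)) // IsGood ρ} +
      Nat.card {ρ : Perm (Fin (m + 1)) // IsGood ρ} + (m + 3) / 2 := by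
  classical
  set sw : Perm (Fin 2) := Equiv.swap 0 1 with hsw
  have swval : ∀ y : Fin 2, (sw y : ℕ) = if (y : ℕ) = 0 then 1 else 0 := by
    rw [hsw]; decide
  -- index of the a-parameter
  have hacond : ∀ t : Fin ((m + 3) / 2),
      (if (t : ℕ) = 0 then 0 else (t : ℕ) + 1) = 0 ∨
      (2 ≤ (if (t : ℕ) = 0 then 0 else (t : ℕ) + 1) ∧
        2 * (if (t : ℕ) = 0 then 0 else (t : ℕ) + 1) ≤ m + 3) := by
    intro t
    rcases Nat.eq_zero_or_pos (t : ℕ) with h | h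
    · simp [h]
    · have := t.isLt
      have h2 : ¬ ((t : ℕ) = 0) := by omega
      simp only [h2, if_false]
      right
      constructor
      · omega
      · omega
  set f : ({ρ : Perm (Fin (m + 2)) // IsGood ρ} ⊕ {ρ : Perm (Fin (m + 1)) // IsGood ρ}
      ⊕ Fin ((m + 3) / 2)) → {π : Perm (Fin (m + 3)) // IsGood π} := fun x =>
    match x with
    | Sum.inl ρ => ⟨dsum (k := m + 2) (m := 1) ρ.1 1,
        (isGood_dsum_iff (by omega) ρ.1 (1 : Perm (Fin 1))).mpr ρ.2⟩
    | Sum.inr (Sum.inl ρ) => ⟨dsum (k := m + 1) (m := 2) ρ.1 sw,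
        (isGood_dsum_iff (by omega) ρ.1 sw).mpr ρ.2⟩
    | Sum.inr (Sum.inr t) => ⟨beta (m + 3) (if (t : ℕ) = 0 then 0 else (t : ℕ) + 1),
        beta_isGood _ _ (hacond t)⟩ with hf
  -- value computations
  have vlast1 : ∀ ρ : Perm (Fin (m + 2)),
      ((dsum (k := m + 2) (m := 1) ρ 1) ⟨m + 2, by omega⟩ : ℕ) = m + 2 := by
    intro ρ
    rw [dsum_val_ge ρ (1 : Perm (Fin 1)) _ (by rw [mkval])]
    rw [one_fin_val]
  have vlast2 : ∀ ρ : Perm (Fin (m + 1)),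
      ((dsum (k := m + 1) (m := 2) ρ sw) ⟨m + 2, by omega⟩ : ℕ) = m + 1 := by
    intro ρ
    rw [dsum_val_ge ρ sw _ (by rw [mkval]; omega)]
    rw [swval]
    rw [mkval, mkval]
    have h2 : ¬ (m + 2 - (m + 1) = 0) := by omega
    simp only [h2, if_false]
  have vsnd2 : ∀ ρ : Perm (Fin (m + 1)),
      ((dsum (k := m + 1) (m := 2) ρ sw) ⟨m + 1, by omega⟩ : ℕ) = m + 2 := by
    intro ρ
    rw [dsum_val_ge ρ sw _ (by rw [mkval])]
    rw [swval]
    rw [mkval, mkval]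
    have h2 : m + 1 - (m + 1) = 0 := by omega
    simp only [h2, if_pos]
  have vlo1 : ∀ (ρ : Perm (Fin (m + 2))) (x : Fin (m + 3)), (x : ℕ) < m + 2 →
      ((dsum (k := m + 2) (m := 1) ρ 1) x : ℕ) < m + 2 := by
    intro ρ x hx
    rw [dsum_val_lt ρ (1 : Perm (Fin 1)) x hx]
    exact (ρ ⟨x, hx⟩).isLt
  have vlo2 : ∀ (ρ : Perm (Fin (m + 1))) (x : Fin (m + 3)), (x : ℕ) < m + 1 →
      ((dsum (k := m + 1) (m := 2) ρ sw) x : ℕ) < m + 1 := by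
    intro ρ x hx
    rw [dsum_val_lt ρ sw x hx]
    exact (ρ ⟨x, hx⟩).isLt
  have hbij : Function.Bijective f := by
    constructor
    · rintro (⟨ρ, hρ⟩ | ⟨ρ, hρ⟩ | t) (⟨ρ', hρ'⟩ | ⟨ρ', hρ'⟩ | t') he
      · -- inl inl
        have he' : dsum (k := m + 2) (m := 1) ρ 1 = dsum (k := m + 2) (m := 1) ρ' 1 :=
          congrArg Subtype.val he
        have hcomp : ρ = ρ' := by
          apply Equiv.ext
          intro i
          apply Fin.ext
          have h1 := dsum_val_lt ρ (1 : Perm (Fin 1)) ⟨(i : ℕ), by have := i.isLt; omega⟩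
            (by rw [mkval]; exact i.isLt)
          have h2 := dsum_val_lt ρ' (1 : Perm (Fin 1)) ⟨(i : ℕ), by have := i.isLt; omega⟩
            (by rw [mkval]; exact i.isLt)
          rw [he', h2] at h1
          exact h1.symm
        cases hcomp
        rfl
      · -- inl vs inr-inl : impossible
        exfalso
        have he' : dsum (k := m + 2) (m := 1) ρ 1 = dsum (k := m + 1) (m := 2) ρ' sw :=
          congrArg Subtype.val he
        have h1 := vlast1 ρ
        have h2 := vlast2 ρ'
        rw [he'] at h1
        omega
      · -- inl vs beta
        exfalso
        have he' : dsum (k := m + 2) (m := 1) ρ 1 =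
            beta (m + 3) (if (t' : ℕ) = 0 then 0 else (t' : ℕ) + 1) :=
          congrArg Subtype.val he
        have h1 := vlo1 ρ ⟨0, by omega⟩ (by rw [mkval]; omega)
        have h2 := beta_first (m + 3) (if (t' : ℕ) = 0 then 0 else (t' : ℕ) + 1) (by omega)
          (by have := t'.isLt; split_ifs <;> omega)
        rw [he'] at h1
        omega
      · exfalso
        have he' : dsum (k := m + 1) (m := 2) ρ sw = dsum (k := m + 2) (m := 1) ρ' 1 :=
          congrArg Subtype.val he
        have h1 := vlast1 ρ'
        have h2 := vlast2 ρ
        rw [← he'] at h1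
        omega
      · -- inr-inl inr-inl
        have he' : dsum (k := m + 1) (m := 2) ρ sw = dsum (k := m + 1) (m := 2) ρ' sw :=
          congrArg Subtype.val he
        have hcomp : ρ = ρ' := by
          apply Equiv.ext
          intro i
          apply Fin.ext
          have h1 := dsum_val_lt ρ sw ⟨(i : ℕ), by have := i.isLt; omega⟩
            (by rw [mkval]; exact i.isLt)
          have h2 := dsum_val_lt ρ' sw ⟨(i : ℕ), by have := i.isLt; omega⟩
            (by rw [mkval]; exact i.isLt)
          rw [he', h2] at h1
          exact h1.symm
        cases hcomp
        rfl
      · exfalso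
        have he' : dsum (k := m + 1) (m := 2) ρ sw =
            beta (m + 3) (if (t' : ℕ) = 0 then 0 else (t' : ℕ) + 1) :=
          congrArg Subtype.val he
        have h1 := vlo2 ρ ⟨0, by omega⟩ (by rw [mkval]; omega)
        have h2 := beta_first (m + 3) (if (t' : ℕ) = 0 then 0 else (t' : ℕ) + 1) (by omega)
          (by have := t'.isLt; split_ifs <;> omega)
        rw [he'] at h1
        omega
      · exfalso
        have he' : beta (m + 3) (if (t : ℕ) = 0 then 0 else (t : ℕ) + 1) =
            dsum (k := m + 2) (m := 1) ρ' 1 :=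
          congrArg Subtype.val he
        have h1 := vlo1 ρ' ⟨0, by omega⟩ (by rw [mkval]; omega)
        have h2 := beta_first (m + 3) (if (t : ℕ) = 0 then 0 else (t : ℕ) + 1) (by omega)
          (by have := t.isLt; split_ifs <;> omega)
        rw [← he'] at h1
        omega
      · exfalso
        have he' : beta (m + 3) (if (t : ℕ) = 0 then 0 else (t : ℕ) + 1) =
            dsum (k := m + 1) (m := 2) ρ' sw :=
          congrArg Subtype.val he
        have h1 := vlo2 ρ' ⟨0, by omega⟩ (by rw [mkval]; omega)
        have h2 := beta_first (m + 3) (if (t : ℕ) = 0 then 0 else (t : ℕ) + 1) (by omega)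
          (by have := t.isLt; split_ifs <;> omega)
        rw [← he'] at h1
        omega
      · -- beta beta
        have he' : beta (m + 3) (if (t : ℕ) = 0 then 0 else (t : ℕ) + 1) =
            beta (m + 3) (if (t' : ℕ) = 0 then 0 else (t' : ℕ) + 1) :=
          congrArg Subtype.val he
        have h1 := beta_last (m + 3) _ (by omega) (hacond t)
        have h2 := beta_last (m + 3) _ (by omega) (hacond t')
        rw [he', h2] at h1
        have hcomp : t = t' := by
          apply Fin.ext
          split_ifs at h1 with hh1 hh2 hh2 <;> omega
        cases hcomp
        rfl
    · rintro ⟨π, hgood⟩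
      obtain ⟨hg1, hg2, hg3⟩ := hgood
      have hpf2 : m + 2 < m + 3 := by omega
      have hpf1 : m + 1 < m + 3 := by omega
      by_cases hA : (π ⟨m + 2, hpf2⟩ : ℕ) = m + 2
      · -- last point fixed
        have hsmall : ∀ i : Fin (m + 2 + 1), (i : ℕ) < m + 2 → (π i : ℕ) < m + 2 := by
          intro i hi
          have hne : (π i : ℕ) ≠ (π ⟨m + 2, hpf2⟩ : ℕ) := by
            intro hc
            have h9 : (i : ℕ) = m + 2 := pinj π hc
            omega
          have := (π i).isLt
          omega
        obtain ⟨ρ, hρ⟩ := exists_restrict (M := m + 2) (k := 1) π hsmall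
        have hπ : π = dsum (k := m + 2) (m := 1) ρ 1 := by
          apply Equiv.ext
          intro x
          apply Fin.ext
          rcases lt_or_ge (x : ℕ) (m + 2) with hx | hx
          · rw [dsum_val_lt ρ (1 : Perm (Fin 1)) x hx]
            exact hρ x hx
          · rw [dsum_val_ge ρ (1 : Perm (Fin 1)) x hx, one_fin_val]
            have hx3 : x = ⟨m + 2, hpf2⟩ := Fin.ext (show (x : ℕ) = m + 2 by
              have := x.isLt; omega)
            rw [hx3]
            omega
        have hρgood : IsGood ρ := (isGood_dsum_iff (by omega) ρ (1 : Perm (Fin 1))).mp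
          (hπ ▸ ⟨hg1, hg2, hg3⟩)
        exact ⟨Sum.inl ⟨ρ, hρgood⟩, Subtype.ext hπ.symm⟩
      · by_cases hB : (π ⟨m + 1, hpf1⟩ : ℕ) = m + 2 ∧ (π ⟨m + 2, hpf2⟩ : ℕ) = m + 1
        · -- swap at the end
          have hsmall : ∀ i : Fin (m + 1 + 2), (i : ℕ) < m + 1 → (π i : ℕ) < m + 1 := by
            intro i hi
            have hne1 : (π i : ℕ) ≠ (π ⟨m + 1, hpf1⟩ : ℕ) := by
              intro hc
              have h9 : (i : ℕ) = m + 1 := pinj π hc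
              omega
            have hne2 : (π i : ℕ) ≠ (π ⟨m + 2, hpf2⟩ : ℕ) := by
              intro hc
              have h9 : (i : ℕ) = m + 2 := pinj π hc
              omega
            have := (π i).isLt
            omega
          obtain ⟨ρ, hρ⟩ := exists_restrict (M := m + 1) (k := 2) π hsmall
          have hπ : π = dsum (k := m + 1) (m := 2) ρ sw := by
            apply Equiv.ext
            intro x
            apply Fin.ext
            rcases lt_or_ge (x : ℕ) (m + 1) with hx | hx
            · rw [dsum_val_lt ρ sw x hx]
              exact hρ x hx
            · rcases eq_or_lt_of_le hx with hx2 | hx2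
              · have hx3 : x = ⟨m + 1, hpf1⟩ := Fin.ext (show (x : ℕ) = m + 1 by omega)
                rw [hx3]
                have h9 := vsnd2 ρ
                have h10 : (π ⟨m + 1, hpf1⟩ : ℕ) = m + 2 := hB.1
                omega
              · have hx3 : x = ⟨m + 2, hpf2⟩ := Fin.ext (show (x : ℕ) = m + 2 by
                  have := x.isLt; omega)
                rw [hx3]
                have h9 := vlast2 ρ
                have h10 : (π ⟨m + 2, hpf2⟩ : ℕ) = m + 1 := hB.2
                omega
          have hρgood : IsGood ρ := (isGood_dsum_iff (by omega) ρ sw).mp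
            (hπ ▸ ⟨hg1, hg2, hg3⟩)
          exact ⟨Sum.inr (Sum.inl ⟨ρ, hρgood⟩), Subtype.ext hπ.symm⟩
        · -- leftover : beta
          have h0 := trichotomy (n := m + 3) (by omega) π hg1 hg2 hg3 hA hB
          obtain ⟨a, hac, hπ⟩ := classify (n := m + 3) (by omega) π hg1 hg3 h0
          have ht : (if a = 0 then 0 else a - 1) < (m + 3) / 2 := by
            rcases hac with h | h
            · simp only [h, if_pos]
              omega
            · have h2 : ¬ (a = 0) := by omega
              simp only [h2, if_false]
              omega
          refine ⟨Sum.inr (Sum.inr ⟨if a = 0 then 0 else a - 1, ht⟩), ?_⟩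
          apply Subtype.ext
          show beta (m + 3)
            (if ((⟨if a = 0 then 0 else a - 1, ht⟩ : Fin ((m + 3) / 2)) : ℕ) = 0
              then 0 else ((⟨if a = 0 then 0 else a - 1, ht⟩ : Fin ((m + 3) / 2)) : ℕ) + 1) = π
          rw [mkval, hπ]
          congr 1
          rcases hac with h | h
          · simp [h]
          · have h2 : ¬ (a = 0) := by omega
            have h3 : ¬ (a - 1 = 0) := by omega
            simp only [h2, h3, if_false]
            omega
  have hcards := Nat.card_eq_of_bijective f hbij
  rw [← hcards, Nat.card_sum, Nat.card_sum, Nat.card_eq_fintype_card (α := Fin ((m + 3) / 2)),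
    Fintype.card_fin]
  omega

/-- the recurrence f(n) = ⌈(n−1)/2⌉ + f(n−1) + f(n−2) for n ≥ 3, where
f(m) counts π ∈ S_m avoiding 231 and 1432 with π² avoiding 231
(⌈(n−1)/2⌉ = (n−1+1)/2 = n/2 in ℕ). -/
theorem stmt8 (n : ℕ) (hn : 3 ≤ n) :
    Nat.card {π : Equiv.Perm (Fin n) //
        AvoidsPat π p231 ∧ AvoidsPat π p1432 ∧ AvoidsPat (π ^ 2) p231} =
      (n - 1 + 1) / 2 +
      Nat.card {π : Equiv.Perm (Fin (n - 1)) //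
        AvoidsPat π p231 ∧ AvoidsPat π p1432 ∧ AvoidsPat (π ^ 2) p231} +
      Nat.card {π : Equiv.Perm (Fin (n - 2)) //
        AvoidsPat π p231 ∧ AvoidsPat π p1432 ∧ AvoidsPat (π ^ 2) p231} := by
  obtain ⟨m, rfl⟩ : ∃ m, n = m + 3 := ⟨n - 3, by omega⟩
  show Nat.card {π : Equiv.Perm (Fin (m + 3)) // IsGood π} =
      (m + 3 - 1 + 1) / 2 +
      Nat.card {π : Equiv.Perm (Fin (m + 2)) // IsGood π} +
      Nat.card {π : Equiv.Perm (Fin (m + 1)) // IsGood π}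
  rw [main_count m]
  have h1 : (m + 3 - 1 + 1) / 2 = (m + 3) / 2 := rfl
  omega
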